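/- Let L be a Lie algebra over ℝ, let λ ∈ ℝ with λ ≠ 0, and let X₁,…,X_n, Y₁,…,Y_n, Z, D be elements of L satisfying the extended Heisenberg relations: [X_i, Y_j] = δ_{ij} Z, [X_i, X_j] = [Y_i, Y_j] = 0, [D, X_i] = X_i, [D, Y_i] = −Y_i for all i, j, and [Z, X_i] = [Z, Y_i] = [Z, D] = 0. Let r = Σ_{k} a_k ⊗ b_k ∈ L ⊗ L be the element r = 2λ·(Σ_{i=1}^n X_i ⊗ Y_i + (1/2)(Z ⊗ D + D ⊗ Z)). Then r satisfies the classical Yang–Baxter equation: the element [r₁₂, r₁₃] + [r₁₂, r₂₃] + [r₁₃, r₂₃] := Σ_{k,l} ([a_k, a_l] ⊗ b_k ⊗ b_l + a_k ⊗ [b_k, a_l] ⊗ b_l + a_k ⊗ a_l ⊗ [b_k, b_l]) vanishes in L ⊗ L ⊗ L; moreover the symmetric element r + flip(r) ∈ L ⊗ L (where flip(a ⊗ b) = b ⊗ a) is invariant under the adjoint action of every element of the span of {X₁,…,X_n, Y₁,…,Y_n, Z, D}: ad_u(r + flip(r)) = 0, where ad_u(a ⊗ b) = [u,a] ⊗ b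 + a ⊗ [u,b]. -/

import Mathlib

/-! The Yang–Baxter expression of `r = Σ a_k ⊗ b_k` is `B r r` for the bilinear map
`B (a ⊗ b) (c ⊗ d) = [a,c] ⊗ b ⊗ d + a ⊗ [b,c] ⊗ d + a ⊗ c ⊗ [b,d]`, so it depends only on `r`
and scales by `λ²`. Write `r = λ (2h + s)` with `h = Σ X_i ⊗ Y_i` and `s = Z ⊗ D + D ⊗ Z`.
By the Heisenberg relations the only nonzero pieces of `B (2h + s) (2h + s)` are
`B h h = -Σ X_i ⊗ Z ⊗ Y_i` and `B h (Z ⊗ D) = B (D ⊗ Z) h = Σ X_i ⊗ Z ⊗ Y_i`, which cancel as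
`4 · (-1) + 2 · 1 + 2 · 1 = 0`. The invariance of `r + flip r` under `ad_u` is linear in `u`,
so it suffices to check it on the generators. -/

open scoped TensorProduct BigOperators

noncomputable section

/-- The first components `a_k` of the representation of
`r = 2λ·(Σ_i X_i ⊗ Y_i + (1/2)(Z ⊗ D + D ⊗ Z))` as `Σ_k a_k ⊗ b_k`. -/
def afam {L : Type*} [LieRing L] [LieAlgebra ℝ L] {n : ℕ} (lam : ℝ)
    (X : Fin n → L) (Z D : L) : Fin n ⊕ Fin 2 → L := fun k =>
  match k with
  | Sum.inl i => (2 * lam) • X i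
  | Sum.inr j => if j = 0 then lam • Z else lam • D

/-- The second components `b_k` of the representation of
`r = 2λ·(Σ_i X_i ⊗ Y_i + (1/2)(Z ⊗ D + D ⊗ Z))` as `Σ_k a_k ⊗ b_k`. -/
def bfam {L : Type*} [LieRing L] {n : ℕ} (Y : Fin n → L) (Z D : L) :
    Fin n ⊕ Fin 2 → L := fun k =>
  match k with
  | Sum.inl i => Y i
  | Sum.inr j => if j = 0 then D else Z

/-- The adjoint action of `u` on the tensor square `L ⊗ L`, determined by
`ad_u(a ⊗ b) = [u,a] ⊗ b + a ⊗ [u,b]`. -/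
def adTsq (L : Type*) [LieRing L] [LieAlgebra ℝ L] (u : L) :
    (L ⊗[ℝ] L) →ₗ[ℝ] (L ⊗[ℝ] L) :=
  TensorProduct.map (LieAlgebra.ad ℝ L u) LinearMap.id
    + TensorProduct.map LinearMap.id (LieAlgebra.ad ℝ L u)

open TensorProduct

namespace LieAlgebra

variable {R L : Type*} [CommRing R] [LieRing L] [LieAlgebra R L]

variable (R L) in
def yangBaxterForm : (L ⊗[R] L) →ₗ[R] (L ⊗[R] L) →ₗ[R] L ⊗[R] (L ⊗[R] L) :=
  let br : L ⊗[R] L →ₗ[R] L := LieModule.toModuleHom R L L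
  TensorProduct.curry <|
    map br LinearMap.id ∘ₗ (tensorTensorTensorComm R L L L L).toLinearMap
    + map LinearMap.id (map br LinearMap.id ∘ₗ (TensorProduct.assoc R L L L).symm.toLinearMap) ∘ₗ
        (TensorProduct.assoc R L L (L ⊗[R] L)).toLinearMap
    + map LinearMap.id (map LinearMap.id br) ∘ₗ
        (TensorProduct.assoc R L L (L ⊗[R] L)).toLinearMap ∘ₗ
        (tensorTensorTensorComm R L L L L).toLinearMap

theorem yangBaxterForm_tmul (a b c d : L) :
    yangBaxterForm R L (a ⊗ₜ b) (c ⊗ₜ d) =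
      ⁅a, c⁆ ⊗ₜ (b ⊗ₜ d) + a ⊗ₜ (⁅b, c⁆ ⊗ₜ d) + a ⊗ₜ (c ⊗ₜ ⁅b, d⁆) := by
  simp [yangBaxterForm]

def cybe (r : L ⊗[R] L) : L ⊗[R] (L ⊗[R] L) := yangBaxterForm R L r r

theorem cybe_sum_tmul {ι : Type*} [Fintype ι] (a b : ι → L) :
    cybe (∑ k, a k ⊗ₜ[R] b k) = ∑ k, ∑ l,
      (⁅a k, a l⁆ ⊗ₜ[R] (b k ⊗ₜ[R] b l) + a k ⊗ₜ[R] (⁅b k, a l⁆ ⊗ₜ[R] b l)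
        + a k ⊗ₜ[R] (a l ⊗ₜ[R] ⁅b k, b l⁆)) := by
  simp only [cybe, map_sum, LinearMap.sum_apply, yangBaxterForm_tmul]
  exact Finset.sum_comm

theorem cybe_add (r s : L ⊗[R] L) :
    cybe (r + s) = cybe r + yangBaxterForm R L r s + yangBaxterForm R L s r + cybe s := by
  simp only [cybe, map_add, LinearMap.add_apply]
  abel

theorem cybe_smul (c : R) (r : L ⊗[R] L) : cybe (c • r) = (c * c) • cybe r := by
  simp only [cybe, map_smul, LinearMap.smul_apply, smul_smul]

end LieAlgebra

section AdInvariance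

variable {L : Type*} [LieRing L] [LieAlgebra ℝ L]

theorem adTsq_tmul (u a b : L) : adTsq L u (a ⊗ₜ b) = ⁅u, a⁆ ⊗ₜ b + a ⊗ₜ ⁅u, b⁆ := by
  simp [adTsq]

theorem adTsq_add (u v : L) : adTsq L (u + v) = adTsq L u + adTsq L v := by
  simp only [adTsq, map_add, map_add_left, map_add_right]
  abel

theorem adTsq_smul (c : ℝ) (u : L) : adTsq L (c • u) = c • adTsq L u := by
  simp only [adTsq, map_smul, map_smul_left, map_smul_right, smul_add]

theorem adTsq_eq_zero_of_mem_span {s : Set L} {t : L ⊗[ℝ] L}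
    (hs : ∀ u ∈ s, adTsq L u t = 0) {u : L} (hu : u ∈ Submodule.span ℝ s) :
    adTsq L u t = 0 := by
  induction hu using Submodule.span_induction with
  | mem v hv => exact hs v hv
  | zero => simp [adTsq]
  | add v w _ _ hv hw => rw [adTsq_add, LinearMap.add_apply, hv, hw, add_zero]
  | smul c v _ hv => rw [adTsq_smul, LinearMap.smul_apply, hv, smul_zero]

end AdInvariance

structure IsExtHeisenberg {L ι : Type*} [LieRing L] [DecidableEq ι] (X Y : ι → L) (Z D : L) :
    Prop where
  lie_X_Y : ∀ i j, ⁅X i, Y j⁆ = if i = j then Z else 0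
  lie_X_X : ∀ i j, ⁅X i, X j⁆ = 0
  lie_Y_Y : ∀ i j, ⁅Y i, Y j⁆ = 0
  lie_D_X : ∀ i, ⁅D, X i⁆ = X i
  lie_D_Y : ∀ i, ⁅D, Y i⁆ = -Y i
  lie_Z_X : ∀ i, ⁅Z, X i⁆ = 0
  lie_Z_Y : ∀ i, ⁅Z, Y i⁆ = 0
  lie_Z_D : ⁅Z, D⁆ = 0

/-- `r / λ` for the r-matrix `r = 2λ (Σ X_i ⊗ Y_i + ½ (Z ⊗ D + D ⊗ Z))`. -/
def extHeisenbergRMatrix (R : Type*) {L ι : Type*} [CommRing R] [LieRing L] [LieAlgebra R L]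
    [Fintype ι] (X Y : ι → L) (Z D : L) : L ⊗[R] L :=
  (2 : R) • ∑ i, X i ⊗ₜ[R] Y i + (Z ⊗ₜ D + D ⊗ₜ Z)

namespace IsExtHeisenberg

open LieAlgebra

variable {R L ι : Type*} [CommRing R] [LieRing L] [DecidableEq ι]
  {X Y : ι → L} {Z D : L} (H : IsExtHeisenberg X Y Z D)
include H

theorem lie_Y_X (i j : ι) : ⁅Y i, X j⁆ = if j = i then -Z else 0 := by
  rw [← lie_skew, H.lie_X_Y j i]; split_ifs <;> simp

theorem lie_X_D (i : ι) : ⁅X i, D⁆ = -X i := by rw [← lie_skew, H.lie_D_X]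
theorem lie_Y_D (i : ι) : ⁅Y i, D⁆ = Y i := by rw [← lie_skew, H.lie_D_Y, neg_neg]
theorem lie_X_Z (i : ι) : ⁅X i, Z⁆ = 0 := by rw [← lie_skew, H.lie_Z_X, neg_zero]
theorem lie_Y_Z (i : ι) : ⁅Y i, Z⁆ = 0 := by rw [← lie_skew, H.lie_Z_Y, neg_zero]
theorem lie_D_Z : ⁅D, Z⁆ = 0 := by rw [← lie_skew, H.lie_Z_D, neg_zero]

section CYBE

variable [LieAlgebra R L]

theorem cybe_ZD_add_DZ : cybe (Z ⊗ₜ[R] D + D ⊗ₜ Z) = 0 := by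
  simp [cybe, yangBaxterForm_tmul, H.lie_Z_D, H.lie_D_Z]

variable [Fintype ι]

theorem cybe_XY :
    cybe (∑ i, X i ⊗ₜ[R] Y i) = -∑ i, X i ⊗ₜ (Z ⊗ₜ[R] Y i) := by
  simp [cybe, map_sum, yangBaxterForm_tmul, H.lie_X_X, H.lie_Y_X, H.lie_Y_Y, tmul_ite, ite_tmul,
    Finset.sum_ite_eq, neg_tmul, tmul_neg]

theorem yangBaxterForm_XY_ZD :
    yangBaxterForm R L (∑ i, X i ⊗ₜ Y i) (Z ⊗ₜ D) = ∑ i, X i ⊗ₜ (Z ⊗ₜ[R] Y i) := by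
  simp [map_sum, yangBaxterForm_tmul, H.lie_X_Z, H.lie_Y_Z, H.lie_Y_D]

theorem yangBaxterForm_XY_DZ :
    yangBaxterForm R L (∑ i, X i ⊗ₜ Y i) (D ⊗ₜ Z) = 0 := by
  simp [map_sum, yangBaxterForm_tmul, H.lie_X_D, H.lie_Y_D, H.lie_Y_Z, neg_tmul]

theorem yangBaxterForm_ZD_XY :
    yangBaxterForm R L (Z ⊗ₜ D) (∑ i, X i ⊗ₜ Y i) = 0 := by
  simp [map_sum, yangBaxterForm_tmul, H.lie_Z_X, H.lie_D_X, H.lie_D_Y, tmul_neg]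

theorem yangBaxterForm_DZ_XY :
    yangBaxterForm R L (D ⊗ₜ Z) (∑ i, X i ⊗ₜ Y i) = ∑ i, X i ⊗ₜ (Z ⊗ₜ[R] Y i) := by
  simp [map_sum, yangBaxterForm_tmul, H.lie_D_X, H.lie_Z_X, H.lie_Z_Y]

theorem cybe_extHeisenbergRMatrix : cybe (extHeisenbergRMatrix R X Y Z D) = 0 := by
  rw [extHeisenbergRMatrix, cybe_add, cybe_smul, H.cybe_XY,
    H.cybe_ZD_add_DZ]
  simp only [map_smul, map_add, LinearMap.smul_apply, LinearMap.add_apply,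
    H.yangBaxterForm_XY_ZD, H.yangBaxterForm_XY_DZ, H.yangBaxterForm_ZD_XY,
    H.yangBaxterForm_DZ_XY]
  module

end CYBE

theorem adTsq_extHeisenbergRMatrix_add_comm [LieAlgebra ℝ L] [Fintype ι] {u : L}
    (hu : u ∈ Submodule.span ℝ (Set.range X ∪ Set.range Y ∪ {Z, D})) :
    adTsq L u (extHeisenbergRMatrix ℝ X Y Z D
      + TensorProduct.comm ℝ L L (extHeisenbergRMatrix ℝ X Y Z D)) = 0 := by
  refine adTsq_eq_zero_of_mem_span (fun v hv => ?_) hu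
  simp only [Set.union_assoc, Set.mem_union, Set.mem_range, Set.mem_insert_iff,
    Set.mem_singleton_iff] at hv
  obtain ⟨m, rfl⟩ | ⟨m, rfl⟩ | rfl | rfl := hv
  · simp [extHeisenbergRMatrix, map_sum, adTsq_tmul, H.lie_X_X, H.lie_X_Y, H.lie_X_Z,
      H.lie_X_D, tmul_ite, ite_tmul, neg_tmul, tmul_neg]
    module
  · simp [extHeisenbergRMatrix, map_sum, adTsq_tmul, H.lie_Y_X, H.lie_Y_Y, H.lie_Y_Z,
      H.lie_Y_D, tmul_ite, ite_tmul, neg_tmul, tmul_neg]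
    module
  · simp [extHeisenbergRMatrix, map_sum, adTsq_tmul, H.lie_Z_X, H.lie_Z_Y, H.lie_Z_D]
  · simp [extHeisenbergRMatrix, map_sum, adTsq_tmul, H.lie_D_X, H.lie_D_Y, H.lie_D_Z,
      neg_tmul, tmul_neg]

end IsExtHeisenberg

theorem sum_afam_tmul_bfam {L : Type*} [LieRing L] [LieAlgebra ℝ L] {n : ℕ} (lam : ℝ)
    (X Y : Fin n → L) (Z D : L) :
    ∑ k, afam lam X Z D k ⊗ₜ[ℝ] bfam Y Z D k = lam • extHeisenbergRMatrix ℝ X Y Z D := by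
  simp only [afam, bfam, extHeisenbergRMatrix, Fintype.sum_sum_type, Fin.sum_univ_two,
    Fin.isValue, reduceIte, one_ne_zero, smul_tmul', Finset.smul_sum, smul_add, smul_smul,
    mul_comm lam]

theorem r_matrix_quasitriangular_general {L : Type*} [LieRing L] [LieAlgebra ℝ L]
    {n : ℕ} (lam : ℝ)
    (X Y : Fin n → L) (Z D : L)
    (hXY : ∀ i j, ⁅X i, Y j⁆ = if i = j then Z else 0)
    (hXX : ∀ i j, ⁅X i, X j⁆ = 0)
    (hYY : ∀ i j, ⁅Y i, Y j⁆ = 0)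
    (hDX : ∀ i, ⁅D, X i⁆ = X i)
    (hDY : ∀ i, ⁅D, Y i⁆ = -Y i)
    (hZX : ∀ i, ⁅Z, X i⁆ = 0)
    (hZY : ∀ i, ⁅Z, Y i⁆ = 0)
    (hZD : ⁅Z, D⁆ = 0) :
    -- the family (a_k, b_k) represents r = 2λ(Σ X_i ⊗ Y_i + ½(Z ⊗ D + D ⊗ Z))
    ((∑ k, afam lam X Z D k ⊗ₜ[ℝ] bfam Y Z D k)
        = (2 * lam) • ((∑ i, X i ⊗ₜ[ℝ] Y i)
            + (2⁻¹ : ℝ) • (Z ⊗ₜ[ℝ] D + D ⊗ₜ[ℝ] Z))) ∧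
    -- the classical Yang--Baxter equation
    ((∑ k, ∑ l,
        (⁅afam lam X Z D k, afam lam X Z D l⁆ ⊗ₜ[ℝ] (bfam Y Z D k ⊗ₜ[ℝ] bfam Y Z D l)
          + afam lam X Z D k ⊗ₜ[ℝ] (⁅bfam Y Z D k, afam lam X Z D l⁆ ⊗ₜ[ℝ] bfam Y Z D l)
          + afam lam X Z D k ⊗ₜ[ℝ] (afam lam X Z D l ⊗ₜ[ℝ] ⁅bfam Y Z D k, bfam Y Z D l⁆)))
        = (0 : L ⊗[ℝ] (L ⊗[ℝ] L))) ∧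
    -- ad-invariance of r + flip(r)
    (∀ u ∈ Submodule.span ℝ (Set.range X ∪ Set.range Y ∪ {Z, D}),
        adTsq L u
          ((∑ k, afam lam X Z D k ⊗ₜ[ℝ] bfam Y Z D k)
            + ∑ k, bfam Y Z D k ⊗ₜ[ℝ] afam lam X Z D k) = 0) := by
  have H : IsExtHeisenberg X Y Z D := ⟨hXY, hXX, hYY, hDX, hDY, hZX, hZY, hZD⟩
  have hr := sum_afam_tmul_bfam lam X Y Z D
  have hflip : ∑ k, bfam Y Z D k ⊗ₜ[ℝ] afam lam X Z D k
      = TensorProduct.comm ℝ L L (∑ k, afam lam X Z D k ⊗ₜ[ℝ] bfam Y Z D k) := by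
    simp [map_sum]
  refine ⟨?_, ?_, fun u hu => ?_⟩
  · rw [hr, extHeisenbergRMatrix]
    module
  · rw [← LieAlgebra.cybe_sum_tmul, hr, LieAlgebra.cybe_smul, H.cybe_extHeisenbergRMatrix,
      smul_zero]
  · rw [hflip, hr, map_smul, ← smul_add, map_smul, H.adTsq_extHeisenbergRMatrix_add_comm hu,
      smul_zero]

/-- Let `X_i, Y_i, Z, D` satisfy the extended Heisenberg relations in a real Lie
algebra `L`, and let `r = Σ_k a_k ⊗ b_k = 2λ·(Σ_i X_i ⊗ Y_i + ½(Z ⊗ D + D ⊗ Z))`.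
Then `r` satisfies the classical Yang–Baxter equation
`[r₁₂,r₁₃] + [r₁₂,r₂₃] + [r₁₃,r₂₃] = 0` in `L ⊗ L ⊗ L`, and the symmetric element
`r + flip(r)` is invariant under the adjoint action of every element of the span
of `{X₁,…,X_n, Y₁,…,Y_n, Z, D}`. -/
theorem r_matrix_quasitriangular {L : Type*} [LieRing L] [LieAlgebra ℝ L]
    {n : ℕ} (hn : 1 ≤ n) (lam : ℝ) (hlam : lam ≠ 0)
    (X Y : Fin n → L) (Z D : L)
    (hXY : ∀ i j, ⁅X i, Y j⁆ = if i = j then Z else 0)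
    (hXX : ∀ i j, ⁅X i, X j⁆ = 0)
    (hYY : ∀ i j, ⁅Y i, Y j⁆ = 0)
    (hDX : ∀ i, ⁅D, X i⁆ = X i)
    (hDY : ∀ i, ⁅D, Y i⁆ = -Y i)
    (hZX : ∀ i, ⁅Z, X i⁆ = 0)
    (hZY : ∀ i, ⁅Z, Y i⁆ = 0)
    (hZD : ⁅Z, D⁆ = 0) :
    -- the family (a_k, b_k) represents r = 2λ(Σ X_i ⊗ Y_i + ½(Z ⊗ D + D ⊗ Z))
    ((∑ k, afam lam X Z D k ⊗ₜ[ℝ] bfam Y Z D k)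
        = (2 * lam) • ((∑ i, X i ⊗ₜ[ℝ] Y i)
            + (2⁻¹ : ℝ) • (Z ⊗ₜ[ℝ] D + D ⊗ₜ[ℝ] Z))) ∧
    -- the classical Yang--Baxter equation
    ((∑ k, ∑ l,
        (⁅afam lam X Z D k, afam lam X Z D l⁆ ⊗ₜ[ℝ] (bfam Y Z D k ⊗ₜ[ℝ] bfam Y Z D l)
          + afam lam X Z D k ⊗ₜ[ℝ] (⁅bfam Y Z D k, afam lam X Z D l⁆ ⊗ₜ[ℝ] bfam Y Z D l)
          + afam lam X Z D k ⊗ₜ[ℝ] (afam lam X Z D l ⊗ₜ[ℝ] ⁅bfam Y Z D k, bfam Y Z D l⁆)))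
        = (0 : L ⊗[ℝ] (L ⊗[ℝ] L))) ∧
    -- ad-invariance of r + flip(r)
    (∀ u ∈ Submodule.span ℝ (Set.range X ∪ Set.range Y ∪ {Z, D}),
        adTsq L u
          ((∑ k, afam lam X Z D k ⊗ₜ[ℝ] bfam Y Z D k)
            + ∑ k, bfam Y Z D k ⊗ₜ[ℝ] afam lam X Z D k) = 0) :=
  r_matrix_quasitriangular_general lam X Y Z D hXY hXX hYY hDX hDY hZX hZY hZD

end
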